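/- arXiv:0902.1623 — 2 statements merged into one kernel-verified Lean document; each statement's English description precedes it below -/
import Mathlib

section
/- Let n ≥ 2 be an integer, let d > 0, and assume either (i) n ≥ 3 and 0 < H ≤ (n-1)/n, or (ii) n = 2 and 0 < H < 1/2, or (iii) n = 2, H = 1/2 and 0 < d < 1. Then there exists a unique a > 0 with M_{H,d}(a) = 0; moreover M_{H,d}(t) < 0 for 0 ≤ t < a and M_{H,d}(t) > 0 for t > a. -/
open Filter Topology

/-- `Ifun m t = ∫₀ᵗ sinh^m(r) dr`. -/
noncomputable def Ifun (m : ℕ) (t : ℝ) : ℝ := ∫ r in (0:ℝ)..t, Real.sinh r ^ m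

/-- `Mfun n H d t = sinh^{n-1}(t) − nH·I_{n-1}(t) − d`. -/
noncomputable def Mfun (n : ℕ) (H d t : ℝ) : ℝ :=
  Real.sinh t ^ (n - 1) - n * H * Ifun (n - 1) t - d

/-- `Pfun n H d t = sinh^{n-1}(t) + nH·I_{n-1}(t) + d`. -/
noncomputable def Pfun (n : ℕ) (H d t : ℝ) : ℝ :=
  Real.sinh t ^ (n - 1) + n * H * Ifun (n - 1) t + d

/-- `Qfun n H d t = (nH·I_{n-1}(t) + d)/√(M·P)`. -/
noncomputable def Qfun (n : ℕ) (H d t : ℝ) : ℝ :=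
  (n * H * Ifun (n - 1) t + d) / Real.sqrt (Mfun n H d t * Pfun n H d t)

/-! For `nH ≤ n - 1` the derivative `M' = sinh^{n-2} ((n-1) cosh − nH sinh)` is positive on
`(0, ∞)`, because `cosh > sinh`; so `M` increases strictly from `M(0) = −d < 0` and has at most one
zero. It does have one because `M` eventually becomes positive: for `n ≥ 3`, or for `nH < n − 1`,
the derivative is bounded below by a positive constant on `[1, ∞)`, so `M → ∞`; in the remaining
case `n = 2`, `H = 1/2` one computes `M(t) = 1 − e^{−t} − d`, which tends to `1 − d > 0`. -/

open Real Set

theorem tendsto_atTop_of_le_deriv {f f' : ℝ → ℝ} {a c : ℝ} (hf : ∀ x, HasDerivAt f (f' x) x)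
    (hc : 0 < c) (hf' : ∀ x, a ≤ x → c ≤ f' x) : Tendsto f atTop atTop := by
  have hlin : ∀ x, a ≤ x → c * (x - a) ≤ f x - f a := fun x hx =>
    (convex_Ici a).mul_sub_le_image_sub_of_le_deriv
      (fun y _ => (hf y).continuousAt.continuousWithinAt)
      (fun y _ => (hf y).differentiableAt.differentiableWithinAt)
      (fun y hy => by rw [(hf y).deriv]; exact hf' y (interior_subset hy))
      a self_mem_Ici x hx hx
  have hline : Tendsto (fun x => c * (x + -a) + f a) atTop atTop :=
    tendsto_atTop_add_const_right _ _
      ((tendsto_atTop_add_const_right _ _ tendsto_id).const_mul_atTop hc)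
  refine tendsto_atTop_mono' atTop ((eventually_ge_atTop a).mono fun x hx => ?_) hline
  linarith [hlin x hx]

theorem exists_unique_zero_of_strictMonoOn {f : ℝ → ℝ} (hf : ContinuousOn f (Ici 0))
    (hmono : StrictMonoOn f (Ici 0)) (h0 : f 0 < 0) (hpos : ∀ᶠ t in atTop, 0 < f t) :
    ∃ a : ℝ, 0 < a ∧ f a = 0 ∧ (∀ t, 0 ≤ t → t < a → f t < 0) ∧ (∀ t, a < t → 0 < f t) ∧
      (∀ a', 0 < a' → f a' = 0 → a' = a) := by
  obtain ⟨T, hT, hT0⟩ := (hpos.and (eventually_ge_atTop 0)).exists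
  obtain ⟨a, ⟨ha0, -⟩, hfa⟩ :=
    intermediate_value_Ioo hT0 (hf.mono Icc_subset_Ici_self) ⟨h0, hT⟩
  refine ⟨a, ha0, hfa, fun t ht hta => ?_, fun t hat => ?_, fun a' ha' hfa' => ?_⟩
  · simpa [hfa] using hmono ht ha0.le hta
  · simpa [hfa] using hmono ha0.le (ha0.trans hat).le hat
  · exact hmono.injOn ha'.le ha0.le (hfa'.trans hfa.symm)

theorem hasDerivAt_Ifun (m : ℕ) (t : ℝ) : HasDerivAt (Ifun m) (sinh t ^ m) t := by
  have hc : Continuous fun r => sinh r ^ m := continuous_sinh.pow m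
  exact intervalIntegral.integral_hasDerivAt_right (hc.intervalIntegrable 0 t)
    (hc.stronglyMeasurableAtFilter _ _) hc.continuousAt

theorem Ifun_one (t : ℝ) : Ifun 1 t = cosh t - 1 := by
  have h : ∀ x ∈ uIcc 0 t, HasDerivAt cosh (sinh x ^ 1) x := fun x _ => by
    simpa using hasDerivAt_cosh x
  rw [Ifun, intervalIntegral.integral_eq_sub_of_hasDerivAt h
    ((continuous_sinh.pow 1).intervalIntegrable 0 t), cosh_zero]

theorem sinh_mul_exp_neg (r : ℝ) : sinh r * exp (-r) = (1 - exp (-r) ^ 2) / 2 := by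
  have : exp r * exp (-r) = 1 := by rw [← exp_add, add_neg_cancel, exp_zero]
  rw [sinh_eq]
  linear_combination this / 2

theorem monotone_sinh_mul_exp_neg : Monotone fun r => sinh r * exp (-r) := fun r s hrs => by
  have : exp (-s) ≤ exp (-r) := exp_le_exp.2 (neg_le_neg hrs)
  simp only [sinh_mul_exp_neg]
  gcongr

/-- The derivative of `Mfun n H d`, written with `cosh = sinh + e^{-t}`. -/
noncomputable def Mderiv (n : ℕ) (H t : ℝ) : ℝ :=
  sinh t ^ (n - 2) * (((n : ℝ) - 1) * exp (-t) + ((n : ℝ) - 1 - n * H) * sinh t)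

section

variable {n : ℕ}

theorem hasDerivAt_Mfun (hn : 2 ≤ n) (H d t : ℝ) : HasDerivAt (Mfun n H d) (Mderiv n H t) t := by
  refine ((((hasDerivAt_sinh t).pow (n - 1)).sub
    ((hasDerivAt_Ifun (n - 1) t).const_mul ((n : ℝ) * H))).sub_const d).congr_deriv ?_
  obtain ⟨k, rfl⟩ := Nat.exists_eq_add_of_le hn
  rw [Mderiv, show 2 + k - 2 = k by omega, show 2 + k - 1 = k + 1 by omega, ← cosh_sub_sinh]
  push_cast
  ring

theorem continuous_Mfun (hn : 2 ≤ n) (H d : ℝ) : Continuous (Mfun n H d) :=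
  continuous_iff_continuousAt.2 fun t => (hasDerivAt_Mfun hn H d t).continuousAt

theorem Mfun_zero (hn : 2 ≤ n) (H d : ℝ) : Mfun n H d 0 = -d := by
  simp [Mfun, Ifun, zero_pow (show n - 1 ≠ 0 by omega)]

theorem Mderiv_pos (hn : 2 ≤ n) {H t : ℝ} (hH : (n : ℝ) * H ≤ n - 1) (ht : 0 < t) :
    0 < Mderiv n H t := by
  have hs := sinh_pos_iff.2 ht
  have hn' : (2 : ℝ) ≤ n := by exact_mod_cast hn
  have h1 : 0 < ((n : ℝ) - 1) * exp (-t) := mul_pos (by linarith) (exp_pos _)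
  have h2 := mul_nonneg (sub_nonneg.2 hH) hs.le
  exact mul_pos (pow_pos hs _) (by linarith)

theorem strictMonoOn_Mfun (hn : 2 ≤ n) {H : ℝ} (d : ℝ) (hH : (n : ℝ) * H ≤ n - 1) :
    StrictMonoOn (Mfun n H d) (Ici 0) :=
  strictMonoOn_of_deriv_pos (convex_Ici 0) (continuous_Mfun hn H d).continuousOn fun x hx => by
    rw [(hasDerivAt_Mfun hn H d x).deriv]
    exact Mderiv_pos hn hH (by simpa using hx)

theorem le_Mderiv_of_lt (hn : 2 ≤ n) {H r : ℝ} (hH : (n : ℝ) * H < n - 1) (hr : 1 ≤ r) :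
    ((n : ℝ) - 1 - n * H) * sinh 1 ^ (n - 1) ≤ Mderiv n H r := by
  have h0 : 0 ≤ sinh 1 := sinh_nonneg_iff.2 zero_le_one
  have h1 : sinh 1 ≤ sinh r := sinh_le_sinh.2 hr
  have hH' : 0 ≤ (n : ℝ) - 1 - n * H := by linarith
  have hn' : (2 : ℝ) ≤ n := by exact_mod_cast hn
  have hpow : sinh r ^ (n - 2) * sinh r = sinh r ^ (n - 1) := by
    rw [← pow_succ]; congr 1; omega
  calc ((n : ℝ) - 1 - n * H) * sinh 1 ^ (n - 1)
      ≤ ((n : ℝ) - 1 - n * H) * sinh r ^ (n - 1) := by gcongr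
    _ = sinh r ^ (n - 2) * (((n : ℝ) - 1 - n * H) * sinh r) := by rw [← hpow]; ring
    _ ≤ Mderiv n H r := by
        unfold Mderiv
        gcongr
        exact le_add_of_nonneg_left (mul_nonneg (by linarith) (exp_pos _).le)

theorem tendsto_Mfun_atTop_of_lt (hn : 2 ≤ n) {H : ℝ} (d : ℝ) (hH : (n : ℝ) * H < n - 1) :
    Tendsto (Mfun n H d) atTop atTop :=
  tendsto_atTop_of_le_deriv (hasDerivAt_Mfun hn H d)
    (mul_pos (by linarith) (pow_pos (sinh_pos_iff.2 one_pos) _)) fun _ => le_Mderiv_of_lt hn hH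

theorem le_Mderiv_of_three_le (hn : 3 ≤ n) {H r : ℝ} (hH : (n : ℝ) * H ≤ n - 1)
    (hr : 1 ≤ r) : ((n : ℝ) - 1) * sinh 1 ^ (n - 3) * (sinh 1 * exp (-1)) ≤ Mderiv n H r := by
  have h0 : 0 ≤ sinh 1 := sinh_nonneg_iff.2 zero_le_one
  have h1 : sinh 1 ≤ sinh r := sinh_le_sinh.2 hr
  have hn' : (0 : ℝ) ≤ n - 1 := by
    have : (3 : ℝ) ≤ n := by exact_mod_cast hn
    linarith
  have hpow : sinh r ^ (n - 3) * sinh r = sinh r ^ (n - 2) := by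
    rw [← pow_succ]; congr 1; omega
  calc ((n : ℝ) - 1) * sinh 1 ^ (n - 3) * (sinh 1 * exp (-1))
      ≤ ((n : ℝ) - 1) * sinh r ^ (n - 3) * (sinh r * exp (-r)) := by
        gcongr ((n : ℝ) - 1) * ?_ ^ (n - 3) * ?_
        exact monotone_sinh_mul_exp_neg hr
    _ = sinh r ^ (n - 2) * (((n : ℝ) - 1) * exp (-r)) := by rw [← hpow]; ring
    _ ≤ Mderiv n H r := by
        unfold Mderiv
        gcongr
        exact le_add_of_nonneg_right (mul_nonneg (sub_nonneg.2 hH) (h0.trans h1))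

theorem tendsto_Mfun_atTop_of_three_le (hn : 3 ≤ n) {H : ℝ} (d : ℝ)
    (hH : (n : ℝ) * H ≤ n - 1) : Tendsto (Mfun n H d) atTop atTop := by
  have hs : 0 < sinh 1 := sinh_pos_iff.2 one_pos
  have hn' : (3 : ℝ) ≤ n := by exact_mod_cast hn
  exact tendsto_atTop_of_le_deriv (hasDerivAt_Mfun (by omega) H d)
    (mul_pos (mul_pos (by linarith) (pow_pos hs _)) (mul_pos hs (exp_pos _)))
    fun _ => le_Mderiv_of_three_le hn hH

end

theorem Mfun_two_half (d t : ℝ) : Mfun 2 (1 / 2) d t = 1 - exp (-t) - d := by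
  rw [Mfun, Ifun_one, ← cosh_sub_sinh]; push_cast; ring

theorem eventually_pos_Mfun_two_half {d : ℝ} (hd : d < 1) :
    ∀ᶠ t in atTop, 0 < Mfun 2 (1 / 2) d t := by
  have : Tendsto (fun t => 1 - exp (-t) - d) atTop (𝓝 (1 - 0 - d)) :=
    (tendsto_exp_neg_atTop_nhds_zero.const_sub 1).sub_const d
  simpa only [Mfun_two_half] using
    this.eventually (lt_mem_nhds (show (0 : ℝ) < 1 - 0 - d by linarith))

/-- Let `n ≥ 2`, `d > 0`, and assume (i) `n ≥ 3` and `0 < H ≤ (n-1)/n`, or (ii) `n = 2`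
and `0 < H < 1/2`, or (iii) `n = 2`, `H = 1/2` and `0 < d < 1`. Then there is a unique
`a > 0` with `M_{H,d}(a) = 0`; moreover `M_{H,d} < 0` on `[0,a)` and `M_{H,d} > 0` on
`(a,∞)`. -/
theorem stmt5 (n : ℕ) (hn : 2 ≤ n) (H d : ℝ) (hd : 0 < d)
    (hcase : (3 ≤ n ∧ 0 < H ∧ H ≤ ((n : ℝ) - 1) / n) ∨
             (n = 2 ∧ 0 < H ∧ H < 1 / 2) ∨
             (n = 2 ∧ H = 1 / 2 ∧ 0 < d ∧ d < 1)) :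
    ∃ a : ℝ, 0 < a ∧ Mfun n H d a = 0 ∧
      (∀ t, 0 ≤ t → t < a → Mfun n H d t < 0) ∧
      (∀ t, a < t → 0 < Mfun n H d t) ∧
      (∀ a', 0 < a' → Mfun n H d a' = 0 → a' = a) := by
  obtain ⟨hH, hpos⟩ : (n : ℝ) * H ≤ n - 1 ∧ ∀ᶠ t in atTop, 0 < Mfun n H d t := by
    rcases hcase with ⟨hn3, -, hH⟩ | ⟨rfl, -, hH⟩ | ⟨rfl, rfl, -, hd1⟩
    · have hH' : (n : ℝ) * H ≤ n - 1 := by rwa [le_div_iff₀' (by positivity)] at hH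
      exact ⟨hH', (tendsto_Mfun_atTop_of_three_le hn3 d hH').eventually_gt_atTop 0⟩
    · have hH' : ((2 : ℕ) : ℝ) * H < (2 : ℕ) - 1 := by push_cast; linarith
      exact ⟨hH'.le, (tendsto_Mfun_atTop_of_lt le_rfl d hH').eventually_gt_atTop 0⟩
    · exact ⟨by norm_num, eventually_pos_Mfun_two_half hd1⟩
  exact exists_unique_zero_of_strictMonoOn (continuous_Mfun hn H d).continuousOn
    (strictMonoOn_Mfun hn d hH) (by rw [Mfun_zero hn]; linarith) hpos
end

section
/- Let n ≥ 3 be an integer, H = (n-1)/n and d < −1. Then the function S_{H,d}(t) := cosh^{n-1}(t) + nH·J_{n-1}(t) + d has a unique zero α > 0, the function R_{H,d}(t) := cosh^{n-1}(t) − nH·J_{n-1}(t) − d has a unique zero c > 0, one has α < c with R_{H,d} > 0 and S_{H,d} > 0 on (α, c), and the function T_{H,d}(t) := (nH·J_{n-1}(t) + d)/√(R_{H,d}(t)·S_{H,d}(t)) is integrable on the interval (α, c) (the improper integral converges at both endpoints). -/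
open Filter Topology

/-- `Jfun m t = ∫₀ᵗ cosh^m(r) dr`. -/
noncomputable def Jfun (m : ℕ) (t : ℝ) : ℝ := ∫ r in (0:ℝ)..t, Real.cosh r ^ m

/-- `Rfun n H d t = cosh^{n-1}(t) − nH·J_{n-1}(t) − d`. -/
noncomputable def Rfun (n : ℕ) (H d t : ℝ) : ℝ :=
  Real.cosh t ^ (n - 1) - n * H * Jfun (n - 1) t - d

/-- `Sfun n H d t = cosh^{n-1}(t) + nH·J_{n-1}(t) + d`. -/
noncomputable def Sfun (n : ℕ) (H d t : ℝ) : ℝ :=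
  Real.cosh t ^ (n - 1) + n * H * Jfun (n - 1) t + d

/-- `Tfun n H d t = (nH·J_{n-1}(t) + d)/√(R·S)`. -/
noncomputable def Tfun (n : ℕ) (H d t : ℝ) : ℝ :=
  (n * H * Jfun (n - 1) t + d) / Real.sqrt (Rfun n H d t * Sfun n H d t)

/-!
With `m = n - 1 ≤ nH`, one has `S' = m cosh^{m-1} sinh + nH cosh^m ≥ 1` on `[0, ∞)` and
`R' ≤ -m cosh^{m-1} e^{-t} ≤ -1` everywhere (as `m ≥ 2` and `2 cosh t · e^{-t} ≥ 1`). So `S` rises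
from `S 0 = 1 + d < 0` and `R` falls from `R 0 = 1 - d > 0`, both at least linearly, which gives
the unique zeros `α` and `c`; since `R + S = 2 cosh^m > 0`, `R α > 0` and hence `α < c`.
The same linear rates give `R t · S t ≥ (c - t)(t - α)` on `(α, c)`, and `1 / √((t - α)(c - t))`
is integrable there: it is at most `(1 / √(t - α) + 1 / √(c - t)) / √(c - α)`.
-/
open Real Set MeasureTheory intervalIntegral

lemma sqrt_add_le_sqrt_add_sqrt {x y : ℝ} (hx : 0 ≤ x) (hy : 0 ≤ y) : √(x + y) ≤ √x + √y := by
  rw [Real.sqrt_le_left (by positivity)]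
  nlinarith [Real.sq_sqrt hx, Real.sq_sqrt hy, Real.sqrt_nonneg x, Real.sqrt_nonneg y]

lemma one_div_sqrt_mul_le {x y : ℝ} (hx : 0 < x) (hy : 0 < y) :
    1 / √(x * y) ≤ (1 / √x + 1 / √y) / √(x + y) := by
  have hsx := Real.sqrt_pos.2 hx
  have hsy := Real.sqrt_pos.2 hy
  rw [Real.sqrt_mul hx.le, le_div_iff₀ (by positivity)]
  calc 1 / (√x * √y) * √(x + y) ≤ 1 / (√x * √y) * (√x + √y) := by
        gcongr; exact sqrt_add_le_sqrt_add_sqrt hx.le hy.le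
    _ = 1 / √x + 1 / √y := by field_simp; ring

lemma integrableOn_one_div_sqrt_sub_left (a b : ℝ) :
    IntegrableOn (fun t => 1 / √(t - a)) (Ioo a b) := by
  refine (integrableOn_deriv_of_nonneg (g := fun t => 2 * √(t - a))
    (by fun_prop) (fun t ht => ?_) (fun t _ => by positivity)).mono_set Ioo_subset_Ioc_self
  exact ((((hasDerivAt_id t).sub_const a).sqrt (sub_pos.2 ht.1).ne').const_mul 2).congr_deriv
    (by simp only [id]; field_simp)

lemma integrableOn_one_div_sqrt_sub_right (a b : ℝ) :
    IntegrableOn (fun t => 1 / √(b - t)) (Ioo a b) := by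
  refine (integrableOn_deriv_of_nonneg (g := fun t => -2 * √(b - t))
    (by fun_prop) (fun t ht => ?_) (fun t _ => by positivity)).mono_set Ioo_subset_Ioc_self
  exact ((((hasDerivAt_id t).const_sub b).sqrt (sub_pos.2 ht.2).ne').const_mul (-2)).congr_deriv
    (by simp only [id]; field_simp)

lemma integrableOn_one_div_sqrt_mul_sub (a b : ℝ) :
    IntegrableOn (fun t => 1 / √((t - a) * (b - t))) (Ioo a b) := by
  refine (((integrableOn_one_div_sqrt_sub_left a b).add
    (integrableOn_one_div_sqrt_sub_right a b)).div_const √(b - a)).mono'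
    (ContinuousOn.aestronglyMeasurable (fun t ht => ?_) measurableSet_Ioo)
    ((ae_restrict_iff' measurableSet_Ioo).2 (Eventually.of_forall fun t ht => ?_))
  · have : 0 < (t - a) * (b - t) := mul_pos (sub_pos.2 ht.1) (sub_pos.2 ht.2)
    fun_prop (disch := positivity)
  · have h := one_div_sqrt_mul_le (sub_pos.2 ht.1) (sub_pos.2 ht.2)
    rw [sub_add_sub_cancel'] at h
    rwa [Real.norm_of_nonneg (by positivity)]

lemma integrableOn_div_sqrt_of_mul_sub_le {f g : ℝ → ℝ} {a b : ℝ} (hf : ContinuousOn f (Icc a b))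
    (hg : ContinuousOn g (Ioo a b)) (hle : ∀ t ∈ Ioo a b, (t - a) * (b - t) ≤ g t) :
    IntegrableOn (fun t => f t / √(g t)) (Ioo a b) := by
  obtain ⟨M, hM⟩ := isCompact_Icc.exists_bound_of_continuousOn hf
  have hprod : ∀ t ∈ Ioo a b, 0 < (t - a) * (b - t) := fun t ht =>
    mul_pos (sub_pos.2 ht.1) (sub_pos.2 ht.2)
  refine ((integrableOn_one_div_sqrt_mul_sub a b).const_mul M).mono'
    (((hf.mono Ioo_subset_Icc_self).div hg.sqrt fun t ht => ?_).aestronglyMeasurable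
      measurableSet_Ioo)
    ((ae_restrict_iff' measurableSet_Ioo).2 (Eventually.of_forall fun t ht => ?_))
  · exact (Real.sqrt_pos.2 ((hprod t ht).trans_le (hle t ht))).ne'
  · rw [norm_div, Real.norm_of_nonneg (Real.sqrt_nonneg _), ← div_eq_mul_one_div]
    exact div_le_div₀ ((norm_nonneg _).trans (hM t (Ioo_subset_Icc_self ht)))
      (hM t (Ioo_subset_Icc_self ht)) (Real.sqrt_pos.2 (hprod t ht))
      (Real.sqrt_le_sqrt (hle t ht))

lemma exists_zero_of_sub_le_sub {f : ℝ → ℝ} {a : ℝ} (hf : ContinuousOn f (Ici a))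
    (hgrowth : ∀ y, a ≤ y → y - a ≤ f y - f a) (ha : f a < 0) : ∃ x, a < x ∧ f x = 0 := by
  have hab : a ≤ a - f a := by linarith
  obtain ⟨x, hx, hfx⟩ := intermediate_value_Icc hab (hf.mono Icc_subset_Ici_self)
    ⟨ha.le, by linarith [hgrowth _ hab]⟩
  exact ⟨x, hx.1.lt_of_ne (by rintro rfl; linarith), hfx⟩

lemma hasDerivAt_Jfun (m : ℕ) (t : ℝ) : HasDerivAt (Jfun m) (cosh t ^ m) t :=
  have hc : Continuous fun r => cosh r ^ m := by fun_prop
  integral_hasDerivAt_right (hc.intervalIntegrable 0 t)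
    hc.aestronglyMeasurable.stronglyMeasurableAtFilter hc.continuousAt

lemma continuous_Jfun (m : ℕ) : Continuous (Jfun m) :=
  continuous_iff_continuousAt.2 fun t => (hasDerivAt_Jfun m t).continuousAt

lemma hasDerivAt_Sfun (n : ℕ) (H d t : ℝ) :
    HasDerivAt (Sfun n H d)
      ((n - 1 : ℕ) * cosh t ^ (n - 1 - 1) * sinh t + n * H * cosh t ^ (n - 1)) t :=
  (((hasDerivAt_cosh t).pow (n - 1)).add ((hasDerivAt_Jfun (n - 1) t).const_mul _)).add_const d

lemma hasDerivAt_Rfun (n : ℕ) (H d t : ℝ) :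
    HasDerivAt (Rfun n H d)
      ((n - 1 : ℕ) * cosh t ^ (n - 1 - 1) * sinh t - n * H * cosh t ^ (n - 1)) t :=
  (((hasDerivAt_cosh t).pow (n - 1)).sub ((hasDerivAt_Jfun (n - 1) t).const_mul _)).sub_const d

lemma differentiable_Sfun (n : ℕ) (H d : ℝ) : Differentiable ℝ (Sfun n H d) :=
  fun t => (hasDerivAt_Sfun n H d t).differentiableAt

lemma differentiable_Rfun (n : ℕ) (H d : ℝ) : Differentiable ℝ (Rfun n H d) :=
  fun t => (hasDerivAt_Rfun n H d t).differentiableAt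

@[simp] lemma Jfun_zero (m : ℕ) : Jfun m 0 = 0 := by simp [Jfun]

lemma Sfun_zero (n : ℕ) (H d : ℝ) : Sfun n H d 0 = 1 + d := by simp [Sfun]

lemma Rfun_zero (n : ℕ) (H d : ℝ) : Rfun n H d 0 = 1 - d := by simp [Rfun]

lemma Rfun_add_Sfun (n : ℕ) (H d t : ℝ) : Rfun n H d t + Sfun n H d t = 2 * cosh t ^ (n - 1) := by
  simp only [Rfun, Sfun]; ring

lemma one_le_two_mul_cosh_mul_exp_neg (t : ℝ) : 1 ≤ 2 * cosh t * exp (-t) := by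
  have h : exp t * exp (-t) = 1 := by rw [← exp_add, add_neg_cancel, exp_zero]
  rw [cosh_eq]
  nlinarith [exp_pos (-t)]

lemma sub_le_Sfun_sub_Sfun {n : ℕ} {H : ℝ} (hH : 1 ≤ n * H) (d : ℝ) {x y : ℝ} (hx : 0 ≤ x)
    (hxy : x ≤ y) : y - x ≤ Sfun n H d y - Sfun n H d x := by
  have hSdiff := differentiable_Sfun n H d
  have := (convex_Ici 0).mul_sub_le_image_sub_of_le_deriv hSdiff.continuous.continuousOn
    hSdiff.differentiableOn (C := 1) (fun t ht => ?_) x hx y (hx.trans hxy) hxy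
  · rwa [one_mul] at this
  rw [interior_Ici, mem_Ioi] at ht
  rw [(hasDerivAt_Sfun n H d t).deriv]
  have hsinh : 0 ≤ ((n - 1 : ℕ) : ℝ) * cosh t ^ (n - 1 - 1) * sinh t :=
    mul_nonneg (by positivity) (sinh_nonneg_iff.2 ht.le)
  have hpow : 1 ≤ cosh t ^ (n - 1) := one_le_pow₀ (one_le_cosh t)
  nlinarith

lemma sub_le_Rfun_sub_Rfun {n : ℕ} (hn : 3 ≤ n) {H : ℝ} (hH : (n : ℝ) - 1 ≤ n * H) (d : ℝ)
    {x y : ℝ} (hxy : x ≤ y) : y - x ≤ Rfun n H d x - Rfun n H d y := by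
  have := image_sub_le_mul_sub_of_deriv_le (differentiable_Rfun n H d) (C := -1) (fun t => ?_) hxy
  · linarith
  have hm : ((n - 1 : ℕ) : ℝ) = n - 1 := by rw [Nat.cast_sub (by omega), Nat.cast_one]
  have hm2 : (2 : ℝ) ≤ n - 1 := by rw [← hm]; exact_mod_cast (by omega : 2 ≤ n - 1)
  have hpow : cosh t ^ (n - 1) = cosh t ^ (n - 1 - 1) * cosh t := by
    rw [← pow_succ]; congr 1; omega
  have hcosh : cosh t ≤ cosh t ^ (n - 1 - 1) := le_self_pow₀ (one_le_cosh t) (by omega)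
  rw [(hasDerivAt_Rfun n H d t).deriv, hm, hpow]
  calc (n - 1 : ℝ) * cosh t ^ (n - 1 - 1) * sinh t - n * H * (cosh t ^ (n - 1 - 1) * cosh t)
      ≤ (n - 1) * cosh t ^ (n - 1 - 1) * sinh t - (n - 1) * (cosh t ^ (n - 1 - 1) * cosh t) := by
        gcongr
    _ = -((n - 1) * (cosh t ^ (n - 1 - 1) * exp (-t))) := by rw [← cosh_sub_sinh]; ring
    _ ≤ -(2 * (cosh t * exp (-t))) := by
        gcongr
    _ ≤ -1 := by linarith [one_le_two_mul_cosh_mul_exp_neg t]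

/-- Let `n ≥ 3`, `H = (n-1)/n` and `d < −1`. Then `S_{H,d}` has a unique zero `α > 0`,
`R_{H,d}` has a unique zero `c > 0`, `α < c`, one has `R_{H,d} > 0` and `S_{H,d} > 0` on
`(α, c)`, and `T_{H,d}` is integrable on `(α, c)`. -/
theorem stmt18 (n : ℕ) (hn : 3 ≤ n) (H d : ℝ) (hH : H = ((n : ℝ) - 1) / n) (hd : d < -1) :
    ∃ α c : ℝ, 0 < α ∧ Sfun n H d α = 0 ∧ (∀ x, 0 < x → Sfun n H d x = 0 → x = α) ∧
      0 < c ∧ Rfun n H d c = 0 ∧ (∀ x, 0 < x → Rfun n H d x = 0 → x = c) ∧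
      α < c ∧
      (∀ t, α < t → t < c → 0 < Rfun n H d t ∧ 0 < Sfun n H d t) ∧
      MeasureTheory.IntegrableOn (Tfun n H d) (Set.Ioo α c) := by
  have hn' : (3 : ℝ) ≤ n := by exact_mod_cast hn
  have hnH : (n : ℝ) - 1 ≤ n * H := by rw [hH, mul_div_cancel₀ _ (by positivity)]
  have hH1 : 1 ≤ (n : ℝ) * H := by linarith
  have hS {x y : ℝ} (hx : 0 ≤ x) (hxy : x ≤ y) := sub_le_Sfun_sub_Sfun hH1 d hx hxy
  have hR {x y : ℝ} (hxy : x ≤ y) := sub_le_Rfun_sub_Rfun hn hnH d hxy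
  have hSmono : StrictMonoOn (Sfun n H d) (Ici 0) := fun x hx y _ hxy => by
    linarith [hS hx hxy.le]
  have hRanti : StrictAnti (Rfun n H d) := fun x y hxy => by linarith [hR hxy.le]
  obtain ⟨α, hα, hSα⟩ := exists_zero_of_sub_le_sub (a := 0)
    (differentiable_Sfun n H d).continuous.continuousOn (fun y hy => hS le_rfl hy)
    (by rw [Sfun_zero]; linarith)
  obtain ⟨c, hc, hRc⟩ := exists_zero_of_sub_le_sub (f := fun t => -Rfun n H d t) (a := 0)
    (differentiable_Rfun n H d).continuous.neg.continuousOn (fun y hy => by linarith [hR hy])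
    (by rw [Rfun_zero]; linarith)
  rw [neg_eq_zero] at hRc
  have hαc : α < c := hRanti.lt_iff_gt.1 <| by
    linarith [Rfun_add_Sfun n H d α, one_le_pow₀ (n := n - 1) (one_le_cosh α)]
  have hpos (t : ℝ) (hαt : α < t) (htc : t < c) : 0 < Rfun n H d t ∧ 0 < Sfun n H d t :=
    ⟨hRc ▸ hRanti htc, hSα ▸ hSmono hα.le (hα.le.trans hαt.le) hαt⟩
  refine ⟨α, c, hα, hSα, fun x hx hx0 => hSmono.injOn hx.le hα.le (hx0.trans hSα.symm), hc, hRc,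
    fun x _ hx0 => hRanti.injective (hx0.trans hRc.symm), hαc, hpos, ?_⟩
  refine integrableOn_div_sqrt_of_mul_sub_le
    (((continuous_Jfun _).const_mul _).add continuous_const).continuousOn
    ((differentiable_Rfun n H d).continuous.mul (differentiable_Sfun n H d).continuous).continuousOn
    fun t ht => ?_
  rw [mul_comm]
  exact mul_le_mul (by linarith [hR ht.2.le]) (by linarith [hS hα.le ht.1.le])
    (sub_nonneg.2 ht.1.le) (hpos t ht.1 ht.2).1.le
end
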